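/- arXiv:math/0702565 — 2 statements merged into one kernel-verified Lean document; each statement's English description precedes it below -/
import Mathlib

section
/- In Φ-coordinates, the pullback of the Killing field K(z₁,z₂) = (−Re z₂, Re z₁) is K = −(1/√2)·cot(z+π/4)·sin(√2 x)·cos(√2 y)·∂ₓ + (1/√2)·tan(z+π/4)·cos(√2 x)·sin(√2 y)·∂_y + cos(√2 x)·cos(√2 y)·∂_z; that is, K(Φ(x,y,z)) equals this linear combination of ∂ₓΦ, ∂_yΦ, ∂_zΦ. -/
open Real

noncomputable def Phi (x y z : ℝ) : ℂ × ℂ :=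
  ((Real.cos (z + π/4) : ℂ) * Complex.exp ((Real.sqrt 2 * y : ℝ) * Complex.I),
   (Real.sin (z + π/4) : ℂ) * Complex.exp ((Real.sqrt 2 * x : ℝ) * Complex.I))

/-- The Killing field K(z₁,z₂) = (−Re z₂, Re z₁) on ℂ² ≅ ℝ⁴. -/
noncomputable def K (p : ℂ × ℂ) : ℂ × ℂ := ((-(p.2.re) : ℝ), ((p.1.re : ℝ) : ℂ))

lemma exp_aux (a x : ℝ) :
    HasDerivAt (fun t : ℝ => Complex.exp ((a * t : ℝ) * Complex.I))
      ((a : ℂ) * Complex.I * Complex.exp ((a * x : ℝ) * Complex.I)) x := by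
  have h1 : HasDerivAt (fun t : ℝ => ((t : ℂ) * ((a : ℂ) * Complex.I)))
      ((a : ℂ) * Complex.I) x := by
    simpa using (Complex.ofRealCLM.hasDerivAt (x := x)).mul_const ((a : ℂ) * Complex.I)
  have key : (fun t : ℝ => Complex.exp ((a * t : ℝ) * Complex.I))
      = fun t : ℝ => Complex.exp ((t : ℂ) * ((a : ℂ) * Complex.I)) := by
    funext t; push_cast; ring_nf
  rw [key]
  convert h1.cexp using 1
  push_cast; ring

lemma ofReal_aux (f : ℝ → ℝ) (f' x : ℝ) (h : HasDerivAt f f' x) :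
    HasDerivAt (fun t : ℝ => ((f t : ℝ) : ℂ)) ((f' : ℝ) : ℂ) x := by
  exact h.ofReal_comp

/-- In Φ-coordinates, K = −(1/√2)·cot(z+π/4)·sin(√2 x)·cos(√2 y)·∂ₓ
+ (1/√2)·tan(z+π/4)·cos(√2 x)·sin(√2 y)·∂_y + cos(√2 x)·cos(√2 y)·∂_z. -/
theorem stmt_12 (x y z : ℝ) (hz : z ∈ Set.Ioo (-(π/4)) (π/4)) :
    K (Phi x y z) =
      (-(1 / Real.sqrt 2) * (Real.cos (z + π/4) / Real.sin (z + π/4)) *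
          Real.sin (Real.sqrt 2 * x) * Real.cos (Real.sqrt 2 * y)) •
        deriv (fun t => Phi t y z) x +
      ((1 / Real.sqrt 2) * Real.tan (z + π/4) *
          Real.cos (Real.sqrt 2 * x) * Real.sin (Real.sqrt 2 * y)) •
        deriv (fun t => Phi x t z) y +
      (Real.cos (Real.sqrt 2 * x) * Real.cos (Real.sqrt 2 * y)) •
        deriv (fun t => Phi x y t) z := by
  obtain ⟨hz1, hz2⟩ := hz
  have hzpos : 0 < z + π/4 := by linarith
  have hzlt : z + π/4 < π/2 := by linarith
  have hs : Real.sin (z + π/4) ≠ 0 :=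
    ne_of_gt (Real.sin_pos_of_pos_of_lt_pi hzpos (by linarith [Real.pi_pos]))
  have hc : Real.cos (z + π/4) ≠ 0 :=
    ne_of_gt (Real.cos_pos_of_mem_Ioo ⟨by linarith [Real.pi_pos], hzlt⟩)
  have hsq : Real.sqrt 2 ≠ 0 := by positivity
  -- derivative in x
  have hx : HasDerivAt (fun t => Phi t y z)
      (0, (Real.sin (z + π/4) : ℂ) * ((Real.sqrt 2 : ℂ) * Complex.I *
        Complex.exp ((Real.sqrt 2 * x : ℝ) * Complex.I))) x := by
    exact (hasDerivAt_const x _).prodMk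
      (((exp_aux (Real.sqrt 2) x)).const_mul ((Real.sin (z + π/4) : ℝ) : ℂ))
  have hy : HasDerivAt (fun t => Phi x t z)
      ((Real.cos (z + π/4) : ℂ) * ((Real.sqrt 2 : ℂ) * Complex.I *
        Complex.exp ((Real.sqrt 2 * y : ℝ) * Complex.I)), 0) y := by
    exact (((exp_aux (Real.sqrt 2) y)).const_mul ((Real.cos (z + π/4) : ℝ) : ℂ)).prodMk
      (hasDerivAt_const y _)
  have hcos : HasDerivAt (fun t : ℝ => ((Real.cos (t + π/4) : ℝ) : ℂ))
      ((-Real.sin (z + π/4) : ℝ) : ℂ) z := by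
    refine ofReal_aux _ _ _ ?_
    simpa [Function.comp_def] using (Real.hasDerivAt_cos (z + π/4)).comp z ((hasDerivAt_id z).add_const (π/4))
  have hsin : HasDerivAt (fun t : ℝ => ((Real.sin (t + π/4) : ℝ) : ℂ))
      ((Real.cos (z + π/4) : ℝ) : ℂ) z := by
    refine ofReal_aux _ _ _ ?_
    simpa [Function.comp_def] using (Real.hasDerivAt_sin (z + π/4)).comp z ((hasDerivAt_id z).add_const (π/4))
  have hzd : HasDerivAt (fun t => Phi x y t)
      (((-Real.sin (z + π/4) : ℝ) : ℂ) * Complex.exp ((Real.sqrt 2 * y : ℝ) * Complex.I),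
       ((Real.cos (z + π/4) : ℝ) : ℂ) * Complex.exp ((Real.sqrt 2 * x : ℝ) * Complex.I)) z := by
    exact (hcos.mul_const _).prodMk (hsin.mul_const _)
  rw [hx.deriv, hy.deriv, hzd.deriv]
  have e1 : Complex.exp ((Real.sqrt 2 * x : ℝ) * Complex.I)
      = (Real.cos (Real.sqrt 2 * x) : ℂ) + (Real.sin (Real.sqrt 2 * x) : ℂ) * Complex.I := by
    rw [Complex.exp_mul_I]; push_cast [Complex.ofReal_cos, Complex.ofReal_sin]; ring
  have e2 : Complex.exp ((Real.sqrt 2 * y : ℝ) * Complex.I)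
      = (Real.cos (Real.sqrt 2 * y) : ℂ) + (Real.sin (Real.sqrt 2 * y) : ℂ) * Complex.I := by
    rw [Complex.exp_mul_I]; push_cast [Complex.ofReal_cos, Complex.ofReal_sin]; ring
  have hsqrt : (Real.sqrt 2) * (Real.sqrt 2) = 2 := Real.mul_self_sqrt (by norm_num)
  have htan : Real.tan (z + π/4) = Real.sin (z + π/4) / Real.cos (z + π/4) :=
    Real.tan_eq_sin_div_cos _
  have hpy1 := Real.sin_sq_add_cos_sq (Real.sqrt 2 * x)
  have hpy2 := Real.sin_sq_add_cos_sq (Real.sqrt 2 * y)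
  have hs' : ((Real.sin (z + π/4) : ℝ) : ℂ) ≠ 0 := Complex.ofReal_ne_zero.mpr hs
  have hc' : ((Real.cos (z + π/4) : ℝ) : ℂ) ≠ 0 := Complex.ofReal_ne_zero.mpr hc
  have hsq' : ((Real.sqrt 2 : ℝ) : ℂ) ≠ 0 := Complex.ofReal_ne_zero.mpr hsq
  refine Prod.ext ?_ ?_ <;>
  · simp only [K, Phi, e1, e2, Prod.smul_mk, Prod.mk_add_mk, Complex.real_smul, htan,
      Prod.fst_add, Prod.snd_add, smul_zero, mul_zero, zero_add, add_zero]
    apply Complex.ext <;>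
    · simp only [Complex.add_re, Complex.add_im, Complex.mul_re, Complex.mul_im,
        Complex.ofReal_re, Complex.ofReal_im, Complex.I_re, Complex.I_im, Complex.neg_re,
        Complex.neg_im, mul_zero, zero_mul, mul_one, one_mul, sub_zero, zero_sub, neg_zero,
        zero_add, add_zero, neg_neg, neg_mul, mul_neg]
      set s := Real.sin (z + π/4) with hsdef
      set c := Real.cos (z + π/4) with hcdef
      set sx := Real.sin (Real.sqrt 2 * x) with hsxdef
      set cx := Real.cos (Real.sqrt 2 * x) with hcxdef
      set sy := Real.sin (Real.sqrt 2 * y) with hsydef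
      set cy := Real.cos (Real.sqrt 2 * y) with hcydef
      field_simp
      try ring
      try linear_combination (s * cx * Real.sqrt 2 * c) * hpy2
      try linear_combination (-(c * cy * Real.sqrt 2 * s)) * hpy1
      try linear_combination cx * hpy2
      try linear_combination (-cy) * hpy1
end

section
/- Let m ∈ ℕ, m ≥ 1, let τ̲ := m⁻¹·e^{−m²/(4π)}, let |ζ| ≤ c̲ for a fixed constant c̲, and let τ := e^ζ·τ̲. Define a > 0 by τ·cosh a = 1/m. Then for m sufficiently large (depending only on c̲), |a + ζ − m²/(4π) − log 2| < τ̲. -/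
open Real

set_option maxHeartbeats 1000000 in
/-- For τ̲ = m⁻¹ e^{−m²/4π}, τ = e^ζ τ̲ with |ζ| ≤ c̲, and a > 0 defined by
τ cosh a = 1/m, one has |a + ζ − m²/4π − log 2| < τ̲ for m large enough
(depending only on c̲). -/
theorem stmt_15 (c : ℝ) (hc : 0 < c) :
    ∃ m₀ : ℕ, ∀ m : ℕ, m₀ ≤ m → ∀ ζ : ℝ, |ζ| ≤ c → ∀ a : ℝ, 0 < a →
      Real.exp ζ * ((m : ℝ)⁻¹ * Real.exp (-(m : ℝ)^2 / (4 * π))) * Real.cosh a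
        = 1 / (m : ℝ) →
      |a + ζ - (m : ℝ)^2 / (4 * π) - Real.log 2|
        < (m : ℝ)⁻¹ * Real.exp (-(m : ℝ)^2 / (4 * π)) := by
  refine ⟨⌈26*c⌉₊ + 100, fun m hm ζ hζ a ha heq => ?_⟩
  rw [neg_div] at heq ⊢
  set M := (m:ℝ)^2/(4*π) with hMdef
  have hπ : (0:ℝ) < π := Real.pi_pos
  have hm100 : (100:ℝ) ≤ (m:ℝ) := by
    have : 100 ≤ m := by omega
    exact_mod_cast this
  have hm26c : 26*c ≤ (m:ℝ) := by
    have h1 : (⌈26*c⌉₊:ℝ) ≤ (m:ℝ) := by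
      have : ⌈26*c⌉₊ ≤ m := by omega
      exact_mod_cast this
    exact le_trans (Nat.le_ceil _) h1
  have hmpos : (0:ℝ) < m := by linarith
  -- cosh a = exp (M - ζ)
  have h2 : Real.exp ζ * Real.exp (-M) * Real.cosh a = 1 := by
    have hm0 : (m:ℝ) ≠ 0 := ne_of_gt hmpos
    field_simp at heq
    nlinarith [heq, hmpos]
  have hcosh : Real.cosh a = Real.exp (M - ζ) := by
    have h3 : Real.exp (ζ + -M) * Real.cosh a = 1 := by rw [Real.exp_add]; linarith [h2]
    have h4 : Real.cosh a = (Real.exp (ζ + -M))⁻¹ := by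
      field_simp at h3 ⊢; linarith
    rw [h4, ← Real.exp_neg]; ring_nf
  have hsinh : 0 < Real.sinh a := Real.sinh_pos_iff.mpr ha
  have hea : Real.exp (M - ζ) < Real.exp a := by
    have := Real.cosh_add_sinh a
    rw [hcosh] at this; linarith
  have haMζ : M - ζ < a := Real.exp_lt_exp.mp hea
  have hlog : Real.log m ≤ (m:ℝ) - 1 := Real.log_le_sub_one_of_pos hmpos
  have hMbig : 2*c + Real.log (m:ℝ) ≤ M := by
    have hpi13 : 4*π ≤ 13 := by nlinarith [Real.pi_lt_d2]
    have h13 : (m:ℝ)^2/13 ≤ M := by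
      rw [hMdef]
      apply div_le_div_of_nonneg_left (by positivity) (by positivity) hpi13
    nlinarith [hm100, hm26c, hlog, hc]
  have habs := abs_le.mp hζ
  have h2a : M + Real.log (m:ℝ) < 2*a := by linarith
  have hebound : Real.exp (-(2*a)) ≤ (m:ℝ)⁻¹ * Real.exp (-M) := by
    have h5 : Real.exp (-(2*a)) ≤ Real.exp (-(M + Real.log (m:ℝ))) :=
      Real.exp_le_exp.mpr (by linarith)
    have h6 : Real.exp (-(M + Real.log (m:ℝ))) = (m:ℝ)⁻¹ * Real.exp (-M) := by
      rw [neg_add, Real.exp_add, Real.exp_neg (Real.log (m:ℝ)), Real.exp_log hmpos]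
      ring
    linarith [h5, h6.le, h6.ge]
  -- exp of LHS expression
  have hEF : Real.exp a * Real.exp (-a) = 1 := by
    rw [← Real.exp_add]; simp
  have hx : Real.exp (a + ζ - M - Real.log 2) = (1 + Real.exp (-(2*a)))⁻¹ := by
    have h2cosh : Real.exp a + Real.exp (-a) = 2 * Real.exp (M - ζ) := by
      have := Real.cosh_eq a
      rw [hcosh] at this; linarith
    have hx2 : Real.exp (-(2*a)) = Real.exp (-a) * Real.exp (-a) := by
      rw [← Real.exp_add]; ring_nf
    rw [Real.exp_sub, Real.exp_sub, Real.exp_add, Real.exp_log two_pos, hx2]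
    have hEpos := Real.exp_pos a
    have hFpos := Real.exp_pos (-a)
    have hMζpos := Real.exp_pos (M - ζ)
    have hexpM : Real.exp M = Real.exp (M - ζ) * Real.exp ζ := by
      rw [← Real.exp_add]; ring_nf
    rw [hexpM]
    have hζpos := Real.exp_pos ζ
    field_simp
    linear_combination Real.exp (-a) * hEF + h2cosh
  have h1t : (0:ℝ) < 1 + Real.exp (-(2*a)) := by positivity
  have hxval : a + ζ - M - Real.log 2 = -Real.log (1 + Real.exp (-(2*a))) := by
    have := congrArg Real.log hx
    rwa [Real.log_exp, Real.log_inv] at this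
  rw [hxval, abs_neg, abs_of_pos (Real.log_pos (by nlinarith [Real.exp_pos (-(2*a))]))]
  have hlt : Real.log (1 + Real.exp (-(2*a))) < Real.exp (-(2*a)) := by
    have hne : 1 + Real.exp (-(2*a)) ≠ 1 := by nlinarith [Real.exp_pos (-(2*a))]
    have := Real.log_lt_sub_one_of_pos h1t hne
    linarith
  linarith
end
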